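/- arXiv:1110.3943 — 2 statements merged into one kernel-verified Lean document; each statement's English description precedes it below -/
import Mathlib

section
/- (Birkhoff) Every doubly stochastic matrix over a finite index type is a convex combination of finitely many permutation matrices. -/
open scoped Classical

/-- (Birkhoff) Every doubly stochastic matrix over a finite index type is a
convex combination of finitely many permutation matrices. -/
theorem stmt_9 {n : ℕ} (M : Matrix (Fin n) (Fin n) ℝ)
    (hnonneg : ∀ i j, 0 ≤ M i j)
    (hrow : ∀ i, ∑ j, M i j = 1)
    (hcol : ∀ j, ∑ i, M i j = 1) :
    ∃ (N : ℕ) (α : Fin N → ℝ) (σ : Fin N → Equiv.Perm (Fin n)),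
      (∀ k, 0 ≤ α k) ∧ (∑ k, α k = 1) ∧
      ∀ i j, M i j = ∑ k, α k * (if σ k i = j then 1 else 0) := by
  have hM : M ∈ doublyStochastic ℝ (Fin n) :=
    mem_doublyStochastic_iff_sum.2 ⟨fun i j => hnonneg i j, hrow, hcol⟩
  obtain ⟨w, hw0, hw1, hwM⟩ := exists_eq_sum_perm_of_mem_doublyStochastic hM
  set e := Fintype.equivFin (Equiv.Perm (Fin n))
  refine ⟨Fintype.card (Equiv.Perm (Fin n)), fun k => w (e.symm k), fun k => e.symm k,
    fun k => hw0 _, ?_, fun i j => ?_⟩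
  · rw [Equiv.sum_comp e.symm]; exact hw1
  · rw [Equiv.sum_comp e.symm (fun σ => w σ * (if σ i = j then 1 else 0))]
    rw [← hwM]
    simp [Matrix.sum_apply, Equiv.Perm.permMatrix, PEquiv.toMatrix_apply,
      Equiv.toPEquiv_apply, mul_ite]
end

section
/- Given a rooted binary phylogenetic tree T, characters f and f^d on leaf set X, and a sharply transitive abelian group Σ acting on state set C, let σ ∈ Σ^X be the unique componentwise operation with σ(f) = f^d, and let c = σ(h) where h is the constant character with value c₁. Then two positions j, k of c are equal if and only if σ_j = σ_k; consequently the minimum number of edge-substitutions on T needed to transform f into f^d equals the parsimony score of c on T with root state fixed to c₁. -/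
open scoped Classical in
/-- The substitution operation on characters induced by the edge above vertex `v`
of a rooted tree (given by its parent map and leaf embedding): it applies the
permutation `τ` to the state of every leaf lying below `v`. -/
noncomputable def subOp {C X V : Type*} (parent : V → V) (leaf : X → V)
    (v : V) (τ : Equiv.Perm C) (f : X → C) : X → C :=
  fun x => if ∃ k : ℕ, parent^[k] (leaf x) = v then τ (f x) else f x

/-- Given a rooted binary phylogenetic tree (vertices `V`, root, parent map,
leaves `X`), characters `f`, `fd` on `X`, and a sharply transitive abelian group
`H` of permutations of the state set `C`, let `σ` be the componentwise operation
with `σ(f) = fd` and `c = σ(h)` for the constant character `h ≡ c1`.  Then two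
positions `j`, `k` of `c` are equal iff `σ j = σ k`; and the minimum number of
edge-substitutions on the tree needed to transform `f` into `fd` equals the
parsimony score of `c` on the tree with root state fixed to `c1`. -/
theorem stmt_17 {C X V : Type*} [Fintype C] [Fintype X] [Fintype V]
    (root : V) (parent : V → V) (leaf : X → V)
    (hleafinj : Function.Injective leaf)
    (hrootfix : parent root = root)
    (hreach : ∀ v : V, ∃ k : ℕ, parent^[k] v = root)
    (hleafchild : ∀ x : X, {u : V | parent u = leaf x ∧ u ≠ leaf x} = ∅)
    (hbinary : ∀ v : V, v ≠ root → (∀ x : X, v ≠ leaf x) →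
      {u : V | parent u = v ∧ u ≠ v}.ncard = 2)
    (hrootchild : {u : V | parent u = root ∧ u ≠ root}.ncard = 1)
    (H : Subgroup (Equiv.Perm C))
    (hcomm : ∀ a ∈ H, ∀ b ∈ H, a * b = b * a)
    (hsharp : ∀ ci cj : C, ∃! τ : Equiv.Perm C, τ ∈ H ∧ τ ci = cj)
    (f fd : X → C) (σ : X → Equiv.Perm C)
    (hσmem : ∀ x, σ x ∈ H) (hσ : ∀ x, σ x (f x) = fd x)
    (c1 : C) (c : X → C) (hc : ∀ x, c x = σ x c1) :
    (∀ j k : X, c j = c k ↔ σ j = σ k) ∧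
    sInf {m : ℕ | ∃ L : List (V × Equiv.Perm C), L.length = m ∧
        (∀ p ∈ L, p.1 ≠ root ∧ p.2 ∈ H ∧ p.2 ≠ 1) ∧
        L.foldr (fun p g => subOp parent leaf p.1 p.2 g) f = fd} =
      sInf {m : ℕ | ∃ g : V → C, g root = c1 ∧ (∀ x, g (leaf x) = c x) ∧
        {v : V | v ≠ root ∧ g v ≠ g (parent v)}.ncard = m} := by
  classical
  -- uniqueness consequences of sharp transitivity
  have huniq : ∀ (a b : C) (τ₁ τ₂ : Equiv.Perm C), τ₁ ∈ H → τ₂ ∈ H → τ₁ a = b → τ₂ a = b →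
      τ₁ = τ₂ := by
    intro a b τ₁ τ₂ h1 h2 e1 e2
    obtain ⟨τ, -, hu⟩ := hsharp a b
    rw [hu τ₁ ⟨h1, e1⟩, hu τ₂ ⟨h2, e2⟩]
  have hfix : ∀ (a : C) (τ : Equiv.Perm C), τ ∈ H → τ a = a → τ = 1 := by
    intro a τ h e
    exact huniq a a τ 1 h H.one_mem e rfl
  have part1 : ∀ j k : X, c j = c k ↔ σ j = σ k := by
    intro j k
    constructor
    · intro h
      exact huniq c1 (c k) (σ j) (σ k) (hσmem j) (hσmem k) (by rw [← hc j]; exact h) (hc k).symm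
    · intro h; rw [hc, hc, h]
  refine ⟨part1, ?_⟩
  -- basic tree facts
  have hrl : ∀ x : X, leaf x ≠ root := by
    intro x hx
    have h1 := hleafchild x
    rw [hx] at h1
    rw [h1] at hrootchild
    simp at hrootchild
  have hiterroot : ∀ k, parent^[k] root = root := fun k => Function.iterate_fixed hrootfix k
  have hnocycle : ∀ v : V, (∃ k, parent^[k] (parent v) = v) → v = root := by
    rintro v ⟨k, hk⟩
    have hk1 : parent^[k + 1] v = v := by
      rw [Function.iterate_succ_apply]; exact hk
    have hper : ∀ t, parent^[(k + 1) * t] v = v := by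
      intro t
      induction t with
      | zero => simp
      | succ t ih => rw [Nat.mul_succ, Function.iterate_add_apply, hk1, ih]
    obtain ⟨m, hm⟩ := hreach v
    have h3 : parent^[k * m + m] v = v := by
      have := hper m; rwa [Nat.succ_mul] at this
    have h2 : parent^[k * m + m] v = root := by
      rw [Function.iterate_add_apply, hm]; exact hiterroot _
    exact h3.symm.trans h2
  have hnotanc : ∀ v : V, v ≠ root → ¬ (∃ k, parent^[k] (parent v) = v) :=
    fun v hv h => hv (hnocycle v h)
  have hancsplit : ∀ v u : V, (∃ k, parent^[k] v = u) ↔ u = v ∨ ∃ k, parent^[k] (parent v) = u := by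
    intro v u
    constructor
    · rintro ⟨k, hk⟩
      cases k with
      | zero => exact Or.inl hk.symm
      | succ k => exact Or.inr ⟨k, by rw [← Function.iterate_succ_apply]; exact hk⟩
    · rintro (rfl | ⟨k, hk⟩)
      · exact ⟨0, rfl⟩
      · exact ⟨k + 1, by rw [Function.iterate_succ_apply]; exact hk⟩
  letI : CommGroup ↥H :=
    { (inferInstance : Group ↥H) with
      mul_comm := fun a b => Subtype.ext (hcomm a.1 a.2 b.1 b.2) }
  -- the fold computation lemma
  have hfold : ∀ (L : List (V × Equiv.Perm C)) (f0 : X → C) (x : X),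
      (L.foldr (fun p g => subOp parent leaf p.1 p.2 g) f0) x
        = ((L.filter (fun p => decide (∃ k : ℕ, parent^[k] (leaf x) = p.1))).map Prod.snd).prod
            (f0 x) := by
    intro L f0 x
    induction L with
    | nil => simp
    | cons p L ih =>
      by_cases hx : ∃ k : ℕ, parent^[k] (leaf x) = p.1
      · simp [List.filter_cons, hx, subOp, ih, Equiv.Perm.mul_apply]
      · simp [List.filter_cons, hx, subOp, ih]
  -- splitting a filtered product over disjoint predicates
  have hsplit : ∀ (l : List (V × Equiv.Perm C)) (p q : V × Equiv.Perm C → Bool),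
      (∀ a ∈ l, a.2 ∈ H) → (∀ a : V × Equiv.Perm C, ¬(p a = true ∧ q a = true)) →
      ((l.filter (fun a => p a || q a)).map Prod.snd).prod
        = ((l.filter p).map Prod.snd).prod * ((l.filter q).map Prod.snd).prod := by
    intro l p q hmem hdisj
    induction l with
    | nil => simp
    | cons a l ih =>
      have hmem' : ∀ b ∈ l, b.2 ∈ H := fun b hb => hmem b (List.mem_cons_of_mem a hb)
      have hPmem : ((l.filter p).map Prod.snd).prod ∈ H := by
        apply list_prod_mem
        intro y hy
        obtain ⟨b, hb, rfl⟩ := List.mem_map.mp hy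
        exact hmem' b (List.mem_of_mem_filter hb)
      by_cases hp : p a = true
      · have hq : ¬ q a = true := fun h => hdisj a ⟨hp, h⟩
        simp only [List.filter_cons, hp, hq, Bool.true_or, if_pos, if_neg, Bool.false_eq_true,
          not_false_eq_true, List.map_cons, List.prod_cons, ite_true, ite_false]
        rw [ih hmem', mul_assoc]
      · by_cases hq : q a = true
        · simp only [List.filter_cons, hp, hq, Bool.or_true, List.map_cons, List.prod_cons,
            Bool.false_eq_true, if_neg, not_false_eq_true, if_pos, ite_true, ite_false]
          rw [ih hmem', ← mul_assoc, hcomm a.2 (hmem a List.mem_cons_self) _ hPmem,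
            mul_assoc]
        · simp only [List.filter_cons, hp, hq, Bool.or_self, Bool.false_eq_true, if_neg,
            not_false_eq_true, ite_false]
          exact ih hmem'
  -- map-filter commutation
  have hfiltermap : ∀ (l : List V) (P : V × Equiv.Perm C → Bool) (pf : V → V × Equiv.Perm C),
      (l.map pf).filter P = (l.filter (fun v => P (pf v))).map pf := by
    intro l P pf
    induction l with
    | nil => rfl
    | cons a l ih =>
      by_cases h : P (pf a) = true <;> simp [List.filter_cons, h, ih]
  -- Direction 1 : every parsimony value is achieved by a substitution list
  have dir1 : ∀ m : ℕ,
      m ∈ {m : ℕ | ∃ g : V → C, g root = c1 ∧ (∀ x, g (leaf x) = c x) ∧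
        {v : V | v ≠ root ∧ g v ≠ g (parent v)}.ncard = m} →
      m ∈ {m : ℕ | ∃ L : List (V × Equiv.Perm C), L.length = m ∧
        (∀ p ∈ L, p.1 ≠ root ∧ p.2 ∈ H ∧ p.2 ≠ 1) ∧
        L.foldr (fun p g => subOp parent leaf p.1 p.2 g) f = fd} := by
    rintro m ⟨g, hgr, hgl, rfl⟩
    choose τg hτgH hτgspec using fun v : V => (hsharp (g (parent v)) (g v)).exists
    set tg : V → ↥H := fun v => ⟨τg v, hτgH v⟩ with htg
    have hτg1 : ∀ u : V, g u = g (parent u) → tg u = 1 := by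
      intro u hu
      apply Subtype.ext
      exact hfix (g (parent u)) (τg u) (hτgH u) (by rw [hτgspec u, hu])
    -- the key invariant
    have key : ∀ n : ℕ, ∀ v : V, (∃ k ≤ n, parent^[k] v = root) →
        (↑(∏ u ∈ Finset.univ.filter (fun u => u ≠ root ∧ ∃ k : ℕ, parent^[k] v = u), tg u) :
          Equiv.Perm C) c1 = g v := by
      have hrootcase :
          (↑(∏ u ∈ Finset.univ.filter (fun u => u ≠ root ∧ ∃ k : ℕ, parent^[k] root = u), tg u) :
            Equiv.Perm C) c1 = g root := by
        have hempty : Finset.univ.filter (fun u => u ≠ root ∧ ∃ k : ℕ, parent^[k] root = u)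
            = (∅ : Finset V) := by
          ext u
          simp only [Finset.mem_filter, Finset.mem_univ, true_and, Finset.notMem_empty,
            iff_false, not_and]
          rintro hu ⟨k, hk⟩
          exact hu (by rw [← hk, hiterroot])
        rw [hempty, Finset.prod_empty, hgr]
        rfl
      intro n
      induction n with
      | zero =>
        rintro v ⟨k, hk0, hk⟩
        obtain rfl : k = 0 := Nat.le_zero.mp hk0
        obtain rfl : v = root := hk
        exact hrootcase
      | succ n ih =>
        rintro v ⟨k, hkn, hk⟩
        by_cases hv : v = root
        · subst hv; exact hrootcase
        · cases k with
          | zero => exact absurd hk hv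
          | succ k =>
            rw [Function.iterate_succ_apply] at hk
            have hIH := ih (parent v) ⟨k, Nat.le_of_succ_le_succ hkn, hk⟩
            have hvnot : v ∉ Finset.univ.filter
                (fun u => u ≠ root ∧ ∃ k : ℕ, parent^[k] (parent v) = u) := by
              simp only [Finset.mem_filter, Finset.mem_univ, true_and, not_and]
              rintro - h
              exact hnotanc v hv h
            have hset : Finset.univ.filter (fun u => u ≠ root ∧ ∃ k : ℕ, parent^[k] v = u)
                = insert v (Finset.univ.filter
                    (fun u => u ≠ root ∧ ∃ k : ℕ, parent^[k] (parent v) = u)) := by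
              ext u
              simp only [Finset.mem_filter, Finset.mem_univ, true_and, Finset.mem_insert]
              constructor
              · rintro ⟨hu, hanc⟩
                rcases (hancsplit v u).mp hanc with h | h
                · exact Or.inl h
                · exact Or.inr ⟨hu, h⟩
              · rintro (rfl | ⟨hu, h⟩)
                · exact ⟨hv, (hancsplit u u).mpr (Or.inl rfl)⟩
                · exact ⟨hu, (hancsplit v u).mpr (Or.inr h)⟩
            rw [hset, Finset.prod_insert hvnot, Subgroup.coe_mul, Equiv.Perm.mul_apply, hIH]
            exact hτgspec v
    set S : Set V := {v : V | v ≠ root ∧ g v ≠ g (parent v)} with hS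
    have hScard : S.ncard = S.toFinset.card := Set.ncard_eq_toFinset_card' S
    refine ⟨(S.toFinset.toList).map (fun v => (v, τg v)), ?_, ?_, ?_⟩
    · rw [List.length_map, Finset.length_toList, hScard]
    · rintro p hp
      obtain ⟨v, hv, rfl⟩ := List.mem_map.mp hp
      rw [Finset.mem_toList, Set.mem_toFinset] at hv
      refine ⟨hv.1, hτgH v, ?_⟩
      intro h1
      apply hv.2
      have h1' : τg v = 1 := h1
      rw [← hτgspec v, h1']
      rfl
    · funext x
      rw [hfold]
      have hmaps : (((S.toFinset.toList).map (fun v => (v, τg v))).filter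
            (fun p => decide (∃ k : ℕ, parent^[k] (leaf x) = p.1))).map Prod.snd
          = ((S.toFinset.toList.filter
              (fun v => decide (∃ k : ℕ, parent^[k] (leaf x) = v))).map tg).map
              (H.subtype) := by
        rw [hfiltermap, List.map_map, List.map_map]
        rfl
      rw [hmaps, ← map_list_prod (H.subtype)]
      have hnodup : (S.toFinset.toList.filter
          (fun v => decide (∃ k : ℕ, parent^[k] (leaf x) = v))).Nodup :=
        (S.toFinset.nodup_toList).filter _
      have htofin : (S.toFinset.toList.filter
            (fun v => decide (∃ k : ℕ, parent^[k] (leaf x) = v))).toFinset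
          = S.toFinset.filter (fun v => ∃ k : ℕ, parent^[k] (leaf x) = v) := by
        rw [List.toFinset_filter, Finset.toList_toFinset]
        simp
      have hlp : ((S.toFinset.toList.filter
            (fun v => decide (∃ k : ℕ, parent^[k] (leaf x) = v))).map tg).prod
          = ∏ u ∈ S.toFinset.filter (fun v => ∃ k : ℕ, parent^[k] (leaf x) = v), tg u := by
        rw [← List.prod_toFinset tg hnodup, htofin]
      have hsub : ∏ u ∈ S.toFinset.filter (fun v => ∃ k : ℕ, parent^[k] (leaf x) = v), tg u
          = ∏ u ∈ Finset.univ.filter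
              (fun u => u ≠ root ∧ ∃ k : ℕ, parent^[k] (leaf x) = u), tg u := by
        apply Finset.prod_subset
        · intro u hu
          rw [Finset.mem_filter, Set.mem_toFinset] at hu
          exact Finset.mem_filter.mpr ⟨Finset.mem_univ u, hu.1.1, hu.2⟩
        · intro u hu hnot
          rw [Finset.mem_filter] at hu
          by_cases hgu : g u = g (parent u)
          · exact hτg1 u hgu
          · exfalso
            apply hnot
            refine Finset.mem_filter.mpr ⟨?_, hu.2.2⟩
            rw [Set.mem_toFinset]
            exact ⟨hu.2.1, hgu⟩
      obtain ⟨k0, hk0⟩ := hreach (leaf x)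
      have hkey := key k0 (leaf x) ⟨k0, le_refl k0, hk0⟩
      have hprodval : (H.subtype (((S.toFinset.toList.filter
            (fun v => decide (∃ k : ℕ, parent^[k] (leaf x) = v))).map tg).prod)) c1
          = c x := by
        rw [hlp, hsub]
        rw [show (H.subtype (∏ u ∈ Finset.univ.filter
            (fun u => u ≠ root ∧ ∃ k : ℕ, parent^[k] (leaf x) = u), tg u))
          = (↑(∏ u ∈ Finset.univ.filter
            (fun u => u ≠ root ∧ ∃ k : ℕ, parent^[k] (leaf x) = u), tg u) : Equiv.Perm C)
          from rfl]
        rw [hkey]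
        exact hgl x
      have hprodσ : H.subtype (((S.toFinset.toList.filter
            (fun v => decide (∃ k : ℕ, parent^[k] (leaf x) = v))).map tg).prod) = σ x := by
        apply huniq c1 (c x) _ _ (SetLike.coe_mem _) (hσmem x) hprodval (hc x).symm
      rw [hprodσ]
      exact hσ x
  -- Direction 2 : every substitution list yields a parsimony assignment of no larger cost
  have dir2 : ∀ m : ℕ,
      m ∈ {m : ℕ | ∃ L : List (V × Equiv.Perm C), L.length = m ∧
        (∀ p ∈ L, p.1 ≠ root ∧ p.2 ∈ H ∧ p.2 ≠ 1) ∧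
        L.foldr (fun p g => subOp parent leaf p.1 p.2 g) f = fd} →
      ∃ m' ∈ {m : ℕ | ∃ g : V → C, g root = c1 ∧ (∀ x, g (leaf x) = c x) ∧
        {v : V | v ≠ root ∧ g v ≠ g (parent v)}.ncard = m}, m' ≤ m := by
    rintro m ⟨L, rfl, hprops, hLfold⟩
    have hmemL : ∀ p ∈ L, p.2 ∈ H := fun p hp => (hprops p hp).2.1
    set g : V → C := fun v =>
      ((L.filter (fun p => decide (∃ k : ℕ, parent^[k] v = p.1))).map Prod.snd).prod c1
      with hgdef
    have hgroot : g root = c1 := by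
      have hnil : L.filter (fun p => decide (∃ k : ℕ, parent^[k] root = p.1)) = [] := by
        rw [List.filter_eq_nil_iff]
        intro p hp
        simp only [decide_eq_true_eq, not_exists]
        intro k hk
        exact (hprops p hp).1 (by rw [← hk, hiterroot])
      rw [hgdef]
      simp only [hnil, List.map_nil, List.prod_nil]
      rfl
    have hprodmem : ∀ (P : V × Equiv.Perm C → Bool),
        ((L.filter P).map Prod.snd).prod ∈ H := by
      intro P
      apply list_prod_mem
      intro y hy
      obtain ⟨b, hb, rfl⟩ := List.mem_map.mp hy
      exact hmemL b (List.mem_of_mem_filter hb)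
    have hgleaf : ∀ x, g (leaf x) = c x := by
      intro x
      have h1 := hfold L f x
      rw [hLfold] at h1
      have h2 : ((L.filter (fun p => decide (∃ k : ℕ, parent^[k] (leaf x) = p.1))).map
          Prod.snd).prod = σ x :=
        huniq (f x) (fd x) _ (σ x) (hprodmem _) (hσmem x) h1.symm (hσ x)
      rw [hgdef]
      simp only []
      rw [h2, ← hc]
    have hgstep : ∀ v : V, v ≠ root →
        g v = ((L.filter (fun p => decide (p.1 = v))).map Prod.snd).prod (g (parent v)) := by
      intro v hv
      have hdisj : ∀ a : V × Equiv.Perm C,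
          ¬((decide (a.1 = v)) = true ∧ (decide (∃ k : ℕ, parent^[k] (parent v) = a.1)) = true) := by
        rintro a ⟨h1, h2⟩
        rw [decide_eq_true_eq] at h1 h2
        exact hnotanc v hv (h1 ▸ h2)
      have hcongr : L.filter (fun p => decide (∃ k : ℕ, parent^[k] v = p.1))
          = L.filter (fun p => decide (p.1 = v) ||
              decide (∃ k : ℕ, parent^[k] (parent v) = p.1)) := by
        apply List.filter_congr
        intro p hp
        rw [← Bool.decide_or]
        exact decide_eq_decide.mpr (hancsplit v p.1)
      rw [hgdef]
      simp only []
      rw [hcongr, hsplit L _ _ hmemL hdisj, Equiv.Perm.mul_apply]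
    have hS'char : ∀ v : V, v ≠ root → g v ≠ g (parent v) → ∃ p ∈ L, p.1 = v := by
      intro v hv hgv
      by_contra hno
      push_neg at hno
      have hnil : L.filter (fun p => decide (p.1 = v)) = [] := by
        rw [List.filter_eq_nil_iff]
        intro p hp
        simp only [decide_eq_true_eq]
        exact hno p hp
      apply hgv
      rw [hgstep v hv, hnil]
      simp
    refine ⟨{v : V | v ≠ root ∧ g v ≠ g (parent v)}.ncard, ⟨g, hgroot, hgleaf, rfl⟩, ?_⟩
    rw [Set.ncard_eq_toFinset_card']
    calc {v : V | v ≠ root ∧ g v ≠ g (parent v)}.toFinset.card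
        ≤ (L.map Prod.fst).toFinset.card := by
          apply Finset.card_le_card
          intro v hv
          rw [Set.mem_toFinset] at hv
          obtain ⟨p, hp, rfl⟩ := hS'char v hv.1 hv.2
          exact List.mem_toFinset.mpr (List.mem_map_of_mem (f := Prod.fst) hp)
      _ ≤ (L.map Prod.fst).length := List.toFinset_card_le _
      _ = L.length := List.length_map _
  -- assemble
  have hBne : {m : ℕ | ∃ g : V → C, g root = c1 ∧ (∀ x, g (leaf x) = c x) ∧
      {v : V | v ≠ root ∧ g v ≠ g (parent v)}.ncard = m}.Nonempty := by
    set g0 : V → C := fun v => if h : ∃ x : X, leaf x = v then c h.choose else c1 with hg0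
    have hg0root : g0 root = c1 := by
      rw [hg0]
      simp only []
      rw [dif_neg]
      rintro ⟨x, hx⟩
      exact hrl x hx
    have hg0leaf : ∀ x, g0 (leaf x) = c x := by
      intro x
      have hx : ∃ y : X, leaf y = leaf x := ⟨x, rfl⟩
      rw [hg0]
      simp only []
      rw [dif_pos hx]
      congr 1
      exact hleafinj hx.choose_spec
    exact ⟨_, g0, hg0root, hg0leaf, rfl⟩
  have hAne : {m : ℕ | ∃ L : List (V × Equiv.Perm C), L.length = m ∧
      (∀ p ∈ L, p.1 ≠ root ∧ p.2 ∈ H ∧ p.2 ≠ 1) ∧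
      L.foldr (fun p g => subOp parent leaf p.1 p.2 g) f = fd}.Nonempty := by
    obtain ⟨m0, hm0⟩ := hBne
    exact ⟨m0, dir1 m0 hm0⟩
  apply le_antisymm
  · exact Nat.sInf_le (dir1 _ (Nat.sInf_mem hBne))
  · obtain ⟨m', hm', hle⟩ := dir2 _ (Nat.sInf_mem hAne)
    exact le_trans (Nat.sInf_le hm') hle
end
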